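/- Under Notation (*): suppose (J(H')^s : m) = p_F is a prime ideal for some F ⊆ X and monomial m ∈ K[X]. Then no monomial involving only the variables in X∖F belongs to (J(H)^s : m); equivalently (J(H)^s : m) = p_F + q with q ⊆ (y). -/

import Mathlib

open MvPolynomial

noncomputable section

/-- A finite simple hypergraph on a vertex set `V`: edges are nonempty subsets of `V`
forming an antichain (a clutter). -/
structure FinHypergraph (σ : Type*) where
  V : Finset σ
  E : Finset (Finset σ)
  edge_sub : ∀ e ∈ E, e ⊆ V
  edge_nonempty : ∀ e ∈ E, e.Nonempty
  simple : ∀ e ∈ E, ∀ f ∈ E, e ⊆ f → e = f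

/-- The prime ideal generated by the variables indexed by `e`. -/
def primeOf {σ : Type*} (K : Type*) [Field K] (e : Finset σ) : Ideal (MvPolynomial σ K) :=
  Ideal.span ((fun i => (X i : MvPolynomial σ K)) '' e)

/-- The cover ideal of a set of edges: the intersection of the edge primes. -/
def coverIdeal {σ : Type*} (K : Type*) [Field K] (E : Finset (Finset σ)) :
    Ideal (MvPolynomial σ K) :=
  ⨅ e ∈ E, primeOf K e

/-- The squarefree monomial supported on `T`. -/
def xU {σ : Type*} (K : Type*) [Field K] (T : Finset σ) : MvPolynomial σ K :=
  ∏ i ∈ T, X i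
/-- `T` is a vertex cover of the edge set `E`. -/
def IsCover {σ : Type*} (E : Finset (Finset σ)) (T : Finset σ) : Prop :=
  ∀ e ∈ E, ∃ v ∈ e, v ∈ T

/-- `T` is a minimal vertex cover of the edge set `E`. -/
def IsMinimalCover {σ : Type*} (E : Finset (Finset σ)) (T : Finset σ) : Prop :=
  IsCover E T ∧ ∀ T' ⊂ T, ¬ IsCover E T'

/-- `m` is a minimal monomial generator of the monomial ideal `I`: it lies in `I`, and
every divisor of `m` lying in `I` is associated to `m`. -/
def IsMinMonGen {σ K : Type*} [Field K] (I : Ideal (MvPolynomial σ K))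
    (m : MvPolynomial σ K) : Prop :=
  m ∈ I ∧ ∀ d : MvPolynomial σ K, d ∣ m → d ∈ I → Associated d m

/-- `(V', E')` is a shadow of the hypergraph `H`. -/
def IsShadow {σ : Type*} [DecidableEq σ] (H : FinHypergraph σ) (V' : Finset σ) (E' : Finset (Finset σ)) : Prop :=
  V' ⊆ H.V ∧ (∀ e ∈ E', e ⊆ V') ∧ (∀ e ∈ E', e.Nonempty) ∧
    (∀ e ∈ E', ∀ f ∈ E', e ⊆ f → e = f) ∧
    E'.card = H.E.card ∧ ∀ e ∈ H.E, e ∩ V' ∈ E'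

/-- The cover ideal of a hypergraph on vertex set `V'` (edges `E'`, subsets of `V'`),
as an ideal of the small polynomial ring `K[V']`. -/
def smallCover {σ : Type*} [DecidableEq σ] (K : Type*) [Field K] (V' : Finset σ)
    (E' : Finset (Finset σ)) : Ideal (MvPolynomial {x : σ // x ∈ V'} K) :=
  ⨅ e ∈ E', primeOf K (e.subtype (· ∈ V'))

/-- `(V', E')` is an odd cycle graph `C_{2n+1}` for some positive `n`. -/
def IsOddCycle {σ : Type*} [DecidableEq σ] (V' : Finset σ) (E' : Finset (Finset σ)) : Prop :=
  ∃ n : ℕ, 0 < n ∧ ∃ f : Fin (2 * n + 1) → σ, Function.Injective f ∧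
    V' = Finset.univ.image f ∧ E' = Finset.univ.image (fun i => ({f i, f (i + 1)} : Finset σ))

/- Notation (*): `H = (V, E)` is a hypergraph with `V = X ∪ {y}` where `X = V \ {y}`;
`y` belongs to exactly one edge `e_y ∈ E`; `e := e_y \ {y}`;
`H' = (X, (E \ {e_y}) ∪ {e})` is the shadow of `H` on `X`, with edge set
`insert (ey.erase y) (H.E.erase ey)`; `H̃ = H_X` is the induced subhypergraph on `X`,
with edge set `H.E.filter (· ⊆ H.V.erase y)`.  Cover ideals of `H'` and `H̃` are taken as
(cone) ideals of the ambient ring `K[V] = MvPolynomial σ K`, generated by the same monomials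
as the corresponding ideals of `K[X]`. -/


/-! Setting the variable `y` to zero maps `J(H)` into `J(H')` and fixes every monomial of `K[X]`.
So if `u * m ∈ J(H)^s` for monomials `u, m` of `K[X]`, then `u * m ∈ J(H')^s`, i.e.
`u ∈ (J(H')^s : m) = p_F`, which is impossible when `u` avoids the variables of `F`. -/

namespace MvPolynomial

variable {σ : Type*} {K : Type*} [Field K]

theorem primeOf_mono {e f : Finset σ} (h : e ⊆ f) : primeOf K e ≤ primeOf K f :=
  Ideal.span_mono (Set.image_mono (Finset.coe_subset.mpr h))

theorem monomial_one_notMem_primeOf {F : Finset σ} {c : σ →₀ ℕ}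
    (hc : Disjoint c.support F) : monomial c (1 : K) ∉ primeOf K F := by
  rw [primeOf, mem_ideal_span_X_image]
  intro h
  obtain ⟨i, hiF, hci⟩ := h c (by classical simp)
  exact Finset.disjoint_left.mp hc (Finsupp.mem_support_iff.mpr hci) hiF

variable (K) [DecidableEq σ]

def killVars (S : Finset σ) : MvPolynomial σ K →ₐ[K] MvPolynomial σ K :=
  aeval fun i => if i ∈ S then 0 else X i

variable {K}

theorem killVars_X_of_mem {S : Finset σ} {i : σ} (hi : i ∈ S) : killVars K S (X i) = 0 := by
  simp [killVars, hi]

theorem killVars_X_of_notMem {S : Finset σ} {i : σ} (hi : i ∉ S) :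
    killVars K S (X i) = X i := by
  simp [killVars, hi]

theorem killVars_monomial_one_of_disjoint {S : Finset σ} {c : σ →₀ ℕ}
    (hc : Disjoint c.support S) : killVars K S (monomial c 1) = monomial c 1 := by
  rw [killVars, aeval_monomial, monomial_eq, map_one, C_1, one_mul, one_mul]
  refine Finsupp.prod_congr fun i hi => ?_
  rw [if_neg (Finset.disjoint_left.mp hc hi)]

theorem primeOf_le_comap_killVars (e S : Finset σ) :
    primeOf K e ≤ (primeOf K (e \ S)).comap (killVars K S) := by
  rw [primeOf, Ideal.span_le]
  rintro _ ⟨i, hi, rfl⟩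
  by_cases hiS : i ∈ S
  · simp [killVars_X_of_mem hiS]
  · rw [SetLike.mem_coe, Ideal.mem_comap, killVars_X_of_notMem hiS]
    exact Ideal.subset_span ⟨i, Finset.mem_sdiff.mpr ⟨hi, hiS⟩, rfl⟩

theorem map_killVars_coverIdeal_le {E E' : Finset (Finset σ)} {S : Finset σ}
    (hE : ∀ f ∈ E', ∃ e ∈ E, e \ S ⊆ f) :
    (coverIdeal K E).map (killVars K S) ≤ coverIdeal K E' := by
  refine le_iInf₂ fun f hf => ?_
  obtain ⟨e, he, hef⟩ := hE f hf
  rw [Ideal.map_le_iff_le_comap]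
  exact (iInf₂_le e he).trans
    ((primeOf_le_comap_killVars e S).trans (Ideal.comap_mono (primeOf_mono hef)))

end MvPolynomial

theorem exists_sdiff_subset_of_mem_shadow {σ : Type*} [DecidableEq σ]
    {E : Finset (Finset σ)} {ey : Finset σ} (y : σ) (hey : ey ∈ E) :
    ∀ f ∈ insert (ey.erase y) (E.erase ey), ∃ e ∈ E, e \ {y} ⊆ f := by
  intro f hf
  rcases Finset.mem_insert.mp hf with rfl | hf
  · exact ⟨ey, hey, by rw [Finset.sdiff_singleton_eq_erase]⟩
  · exact ⟨f, Finset.mem_of_mem_erase hf, Finset.sdiff_subset⟩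

theorem colon_shadow_prime_no_outside_monomial {σ K : Type*} [DecidableEq σ] [Field K]
    (H : FinHypergraph σ) (y : σ) (ey : Finset σ)
    (heyE : ey ∈ H.E)
    (s : ℕ) (d : σ →₀ ℕ) (hd : d.support ⊆ H.V.erase y)
    (F : Finset σ)
    (hcolon : ((coverIdeal K (insert (ey.erase y) (H.E.erase ey))) ^ s).colon
        (Ideal.span {(monomial d (1 : K) : MvPolynomial σ K)}) = primeOf K F) :
    ∀ c : σ →₀ ℕ, (c.support : Set σ) ⊆ ((H.V.erase y : Finset σ) : Set σ) \ (F : Set σ) →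
      (monomial c (1 : K) : MvPolynomial σ K) ∉
        ((coverIdeal K H.E) ^ s).colon
          (Ideal.span {(monomial d (1 : K) : MvPolynomial σ K)}) := by
  intro c hc hmem
  have hcF : Disjoint c.support F :=
    Finset.disjoint_left.mpr fun i hi hiF => (hc hi).2 hiF
  have hcdy : Disjoint (c + d).support {y} := by
    refine Finset.disjoint_singleton_right.mpr fun hy => ?_
    rcases Finset.mem_union.mp (Finsupp.support_add hy) with hy | hy
    · exact Finset.notMem_erase y _ (hc hy).1
    · exact Finset.notMem_erase y _ (hd hy)
  refine monomial_one_notMem_primeOf (K := K) hcF ?_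
  rw [Ideal.mem_colon_span_singleton, monomial_mul, one_mul] at hmem
  rw [← hcolon, Ideal.mem_colon_span_singleton, monomial_mul, one_mul]
  have hkill := Ideal.mem_map_of_mem (killVars K {y}) hmem
  rw [Ideal.map_pow, killVars_monomial_one_of_disjoint hcdy] at hkill
  exact Ideal.pow_right_mono (map_killVars_coverIdeal_le
    (exists_sdiff_subset_of_mem_shadow y heyE)) s hkill
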